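/- arXiv:1711.02428 — 3 statements merged into one kernel-verified Lean document; each statement's English description precedes it below -/
import Mathlib

section
/- (Lemma 4.1, first essential inequality) The isoperimetric constants at infinity satisfy α_ess(G)/2 ≤ α_d^ess(V), i.e. α_ess(G) ≤ 2·α_d^ess(V), as an inequality in [0,∞]. -/
open scoped Classical ENNReal
open MeasureTheory

noncomputable section

/-- A real function on `[0, L]` which is continuous and piecewise continuously
differentiable: there is a finite partition `0 = x 0 < x 1 < ... < x n = L` such that
on each closed piece the function has a continuous derivative. -/
def PiecewiseC1 (f : ℝ → ℝ) (L : ℝ) : Prop :=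
  ContinuousOn f (Set.Icc 0 L) ∧
  ∃ (n : ℕ) (x : Fin (n + 1) → ℝ), x 0 = 0 ∧ x (Fin.last n) = L ∧ StrictMono x ∧
    ∀ i : Fin n, ∃ g : ℝ → ℝ,
      ContinuousOn g (Set.Icc (x i.castSucc) (x i.succ)) ∧
      ∀ t ∈ Set.Icc (x i.castSucc) (x i.succ),
        HasDerivWithinAt f (g t) (Set.Icc (x i.castSucc) (x i.succ)) t

/-- The underlying (unoriented) simple graph of a set of edges `E` with endpoint
map `ends : E → V × V`. -/
def graphOf {V E : Type} (ends : E → V × V) : SimpleGraph V :=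
  SimpleGraph.fromRel fun u v => ∃ e, ends e = (u, v)

/-- A metric graph: a connected, locally finite, simple combinatorial graph with
countably infinite vertex and edge sets, each edge having a finite positive length.
Each edge carries an (auxiliary) orientation given by `ends`. -/
structure MetricGraph : Type 1 where
  V : Type
  E : Type
  countV : Countable V
  infV : Infinite V
  countE : Countable E
  infE : Infinite E
  ends : E → V × V
  len : E → ℝ
  len_pos : ∀ e, 0 < len e
  no_loops : ∀ e, (ends e).1 ≠ (ends e).2
  no_multi : Function.Injective fun e => Sym2.mk (ends e)
  locfin : ∀ v, {e | (ends e).1 = v ∨ (ends e).2 = v}.Finite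
  conn : (graphOf ends).Connected

namespace MetricGraph

/-- The underlying simple graph. -/
def graph (Γ : MetricGraph) : SimpleGraph Γ.V := graphOf Γ.ends

/-- The star of a vertex: the set of edges incident to it. -/
def star (Γ : MetricGraph) (v : Γ.V) : Set Γ.E :=
  {e | (Γ.ends e).1 = v ∨ (Γ.ends e).2 = v}

/-- Combinatorial degree of a vertex. -/
def degree (Γ : MetricGraph) (v : Γ.V) : ℕ := (Γ.locfin v).toFinset.card

/-- The vertices of a (finite) subgraph given by a finite set of edges. -/
def vertsOf (Γ : MetricGraph) (F : Finset Γ.E) : Finset Γ.V :=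
  F.image (fun e => (Γ.ends e).1) ∪ F.image fun e => (Γ.ends e).2

/-- The degree of a vertex inside the subgraph given by the edge set `F`. -/
def degIn (Γ : MetricGraph) (F : Finset Γ.E) (v : Γ.V) : ℕ :=
  (F.filter fun e => (Γ.ends e).1 = v ∨ (Γ.ends e).2 = v).card

/-- Connectedness of the subgraph spanned by the edge set `F`. -/
def SubConn (Γ : MetricGraph) (F : Finset Γ.E) : Prop :=
  ((SimpleGraph.fromRel fun u v => ∃ e ∈ F, Γ.ends e = (u, v)).induce
    (↑(Γ.vertsOf F) : Set Γ.V)).Connected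

/-- A finite connected subgraph (with at least one edge), given by its edge set. -/
def IsFinSubgraph (Γ : MetricGraph) (F : Finset Γ.E) : Prop :=
  F.Nonempty ∧ Γ.SubConn F

/-- The boundary of a finite subgraph with respect to `Γ`: the vertices whose degree
in the subgraph is strictly smaller than the degree in `Γ`. -/
def bdry (Γ : MetricGraph) (F : Finset Γ.E) : Finset Γ.V :=
  (Γ.vertsOf F).filter fun v => Γ.degIn F v < Γ.degree v

/-- `deg (∂_G G̃)`. -/
def degBdry (Γ : MetricGraph) (F : Finset Γ.E) : ℝ :=
  ∑ v ∈ Γ.bdry F, (Γ.degIn F v : ℝ)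

/-- The total length (Lebesgue measure) of a finite subgraph. -/
def mes (Γ : MetricGraph) (F : Finset Γ.E) : ℝ := ∑ e ∈ F, Γ.len e

/-- The isoperimetric (Cheeger) constant of a metric graph. -/
def alpha (Γ : MetricGraph) : ℝ :=
  sInf {r : ℝ | ∃ F : Finset Γ.E, Γ.IsFinSubgraph F ∧ r = Γ.degBdry F / Γ.mes F}

/-- The isoperimetric constant at infinity, as an element of `[0,∞]`. -/
def alphaEssEnn (Γ : MetricGraph) : ℝ≥0∞ :=
  ⨆ W : Finset Γ.E, ⨅ (F : Finset Γ.E) (_ : Γ.IsFinSubgraph F ∧ Disjoint F W),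
    ENNReal.ofReal (Γ.degBdry F / Γ.mes F)

/-- The vertex weight `m(v) = Σ_{e ∈ E_v} |e|`. -/
def mweight (Γ : MetricGraph) (v : Γ.V) : ℝ :=
  ∑ e ∈ (Γ.locfin v).toFinset, Γ.len e

/-- The set of boundary edges of a vertex set: edges with exactly one endpoint in `X`. -/
def Eb (Γ : MetricGraph) (X : Set Γ.V) : Set Γ.E :=
  {e | Xor' ((Γ.ends e).1 ∈ X) ((Γ.ends e).2 ∈ X)}

/-- The discrete isoperimetric constant of a vertex set `U`. -/
def alphaD (Γ : MetricGraph) (U : Set Γ.V) : ℝ :=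
  sInf {r : ℝ | ∃ X : Finset Γ.V, ↑X ⊆ U ∧ X.Nonempty ∧
    r = ((Γ.Eb ↑X).ncard : ℝ) / ∑ v ∈ X, Γ.mweight v}

/-- The discrete isoperimetric constant at infinity, as an element of `[0,∞]`. -/
def alphaDEssEnn (Γ : MetricGraph) : ℝ≥0∞ :=
  ⨆ X : Finset Γ.V, ENNReal.ofReal (Γ.alphaD (↑X : Set Γ.V)ᶜ)

/-- The combinatorial isoperimetric constant. -/
def alphaComb (Γ : MetricGraph) : ℝ :=
  sInf {r : ℝ | ∃ X : Finset Γ.V, X.Nonempty ∧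
    r = ((Γ.Eb ↑X).ncard : ℝ) / ∑ v ∈ X, (Γ.degree v : ℝ)}

/-- `ℓ*(G) = sup of edge lengths`. -/
def ellSup (Γ : MetricGraph) : ℝ := sSup (Set.range Γ.len)

/-- `ℓ_*(G) = inf of edge lengths`. -/
def ellInf (Γ : MetricGraph) : ℝ := sInf (Set.range Γ.len)

/-- `ℓ*(G)` as an element of `[0,∞]`. -/
def ellSupEnn (Γ : MetricGraph) : ℝ≥0∞ := ⨆ e : Γ.E, ENNReal.ofReal (Γ.len e)

/-- `ℓ*_ess(G) = inf_F sup_{e ∉ F} |e|` as an element of `[0,∞]`. -/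
def ellSupEssEnn (Γ : MetricGraph) : ℝ≥0∞ :=
  ⨅ W : Finset Γ.E, ⨆ e : {e : Γ.E // e ∉ W}, ENNReal.ofReal (Γ.len (e : Γ.E))

/-- Outgoing edges at a vertex (for the fixed orientation). -/
def plusE (Γ : MetricGraph) (v : Γ.V) : Set Γ.E := {e | (Γ.ends e).1 = v}

/-- Incoming edges at a vertex (for the fixed orientation). -/
def minusE (Γ : MetricGraph) (v : Γ.V) : Set Γ.E := {e | (Γ.ends e).2 = v}

/-- The curvature `K(v) = ((#E_v⁺ − #E_v⁻)/#E_v⁺) · inf_{e ∈ E_v⁺} 1/|e|`. -/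
def Kcurv (Γ : MetricGraph) (v : Γ.V) : ℝ :=
  (((Γ.plusE v).ncard : ℝ) - ((Γ.minusE v).ncard : ℝ)) / ((Γ.plusE v).ncard : ℝ) *
    sInf ((fun e => 1 / Γ.len e) '' Γ.plusE v)

/-- The combinatorial curvature `K_comb(v) = 1 − #E_v⁻/#E_v⁺`. -/
def Kcomb (Γ : MetricGraph) (v : Γ.V) : ℝ :=
  1 - ((Γ.minusE v).ncard : ℝ) / ((Γ.plusE v).ncard : ℝ)

/-- `liminf_{v ∈ V} K(v) = sup over finite W of inf_{v ∉ W} K(v)`, in `[0,∞]`. -/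
def KcurvEssEnn (Γ : MetricGraph) : ℝ≥0∞ :=
  ⨆ W : Finset Γ.V, ⨅ v : {v : Γ.V // v ∉ W}, ENNReal.ofReal (Γ.Kcurv (v : Γ.V))

/-- `liminf_{v ∈ V} K_comb(v) = sup over finite W of inf_{v ∉ W} K_comb(v)`. -/
def KcombLiminf (Γ : MetricGraph) : ℝ :=
  sSup (Set.range fun W : Finset Γ.V => sInf (Γ.Kcomb '' (↑W : Set Γ.V)ᶜ))

/-- The value of an edgewise function at an endpoint of an edge. -/
def endVal (Γ : MetricGraph) (f : Γ.E → ℝ → ℝ) (e : Γ.E) (v : Γ.V) : ℝ :=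
  if (Γ.ends e).1 = v then f e 0 else f e (Γ.len e)

/-- A test function on the metric graph `Γ`: a family of continuous, piecewise `C¹`
functions on the edges, matching at the vertices, vanishing on all but finitely
many edges. -/
structure TestFun (Γ : MetricGraph) where
  f : Γ.E → ℝ → ℝ
  piecewise : ∀ e, PiecewiseC1 (f e) (Γ.len e)
  vertexCont : ∀ e e' : Γ.E, ∀ v : Γ.V, e ∈ Γ.star v → e' ∈ Γ.star v →
    Γ.endVal f e v = Γ.endVal f e' v
  finSupp : {e : Γ.E | ∃ x ∈ Set.Icc 0 (Γ.len e), f e x ≠ 0}.Finite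

/-- `‖f‖² = Σ_e ∫₀^{|e|} f_e(x)² dx`. -/
def TestFun.normSq {Γ : MetricGraph} (φ : TestFun Γ) : ℝ :=
  ∑ᶠ e : Γ.E, ∫ x in (0:ℝ)..Γ.len e, (φ.f e x) ^ 2

/-- `‖f′‖² = Σ_e ∫₀^{|e|} f_e′(x)² dx`. -/
def TestFun.energySq {Γ : MetricGraph} (φ : TestFun Γ) : ℝ :=
  ∑ᶠ e : Γ.E, ∫ x in (0:ℝ)..Γ.len e, (deriv (φ.f e) x) ^ 2

/-- A test function is nonzero if it does not vanish identically on the graph. -/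
def TestFun.Nonzero {Γ : MetricGraph} (φ : TestFun Γ) : Prop :=
  ∃ e : Γ.E, ∃ x ∈ Set.Icc 0 (Γ.len e), φ.f e x ≠ 0

/-- The bottom of the spectrum of the Kirchhoff Laplacian, via the variational
(Rayleigh quotient) characterization. -/
def lambda0 (Γ : MetricGraph) : ℝ :=
  sInf {r : ℝ | ∃ φ : TestFun Γ, φ.Nonzero ∧ r = φ.energySq / φ.normSq}

end MetricGraph

/-- A weighted graph `(V, m, b)`: a connected, locally finite, simple combinatorial
graph with countably infinite vertex and edge sets, an edge weight `b` and a vertex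
weight `m`. -/
structure WeightedGraph : Type 1 where
  V : Type
  E : Type
  countV : Countable V
  infV : Infinite V
  countE : Countable E
  infE : Infinite E
  ends : E → V × V
  no_loops : ∀ e, (ends e).1 ≠ (ends e).2
  no_multi : Function.Injective fun e => Sym2.mk (ends e)
  locfin : ∀ v, {e | (ends e).1 = v ∨ (ends e).2 = v}.Finite
  conn : (graphOf ends).Connected
  b : E → ℝ
  b_pos : ∀ e, 0 < b e
  m : V → ℝ
  m_pos : ∀ v, 0 < m v

namespace WeightedGraph

/-- An edge weight `d` is intrinsic if `Σ_{e ∈ E_v} d(e)² b(e) ≤ m(v)` for all `v`. -/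
def Intrinsic (Γ : WeightedGraph) (d : Γ.E → ℝ) : Prop :=
  ∀ v, ∑ e ∈ (Γ.locfin v).toFinset, d e ^ 2 * Γ.b e ≤ Γ.m v

/-- The boundary edges of a vertex set: edges with exactly one endpoint in `X`. -/
def Eb (Γ : WeightedGraph) (X : Set Γ.V) : Set Γ.E :=
  {e | Xor' ((Γ.ends e).1 ∈ X) ((Γ.ends e).2 ∈ X)}

/-- The discrete isoperimetric constant `α_d(U)` with respect to the weight `d`. -/
def alphaD (Γ : WeightedGraph) (d : Γ.E → ℝ) (U : Set Γ.V) : ℝ :=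
  sInf {r : ℝ | ∃ X : Finset Γ.V, ↑X ⊆ U ∧ X.Nonempty ∧
    r = (∑ᶠ e ∈ Γ.Eb ↑X, d e * Γ.b e) / ∑ v ∈ X, Γ.m v}

/-- The discrete isoperimetric constant at infinity, in `[0,∞]`. -/
def alphaDEssEnn (Γ : WeightedGraph) (d : Γ.E → ℝ) : ℝ≥0∞ :=
  ⨆ X : Finset Γ.V, ENNReal.ofReal (Γ.alphaD d (↑X : Set Γ.V)ᶜ)

/-- The energy form `Q(u) = Σ_e b(e) (u(e_i) − u(e_0))²`. -/
def Q (Γ : WeightedGraph) (u : Γ.V → ℝ) : ℝ :=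
  ∑ᶠ e : Γ.E, Γ.b e * (u (Γ.ends e).2 - u (Γ.ends e).1) ^ 2

/-- The squared norm `Σ_v m(v) u(v)²`. -/
def normSqD (Γ : WeightedGraph) (u : Γ.V → ℝ) : ℝ :=
  ∑ᶠ v : Γ.V, Γ.m v * u v ^ 2

/-- The bottom of the spectrum of the Friedrichs extension of the weighted Laplacian,
via the variational characterization over finitely supported functions. -/
def lambda0 (Γ : WeightedGraph) : ℝ :=
  sInf {r : ℝ | ∃ u : Γ.V → ℝ, (Function.support u).Finite ∧ u ≠ 0 ∧
    r = Γ.Q u / Γ.normSqD u}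

/-- The bottom of the essential spectrum of the Friedrichs extension, via Glazman's
decomposition principle, in `[0,∞]`. -/
def lambda0EssEnn (Γ : WeightedGraph) : ℝ≥0∞ :=
  ⨆ X : Finset Γ.V, ⨅ (u : Γ.V → ℝ)
    (_ : (Function.support u).Finite ∧ u ≠ 0 ∧ ∀ v ∈ X, u v = 0),
      ENNReal.ofReal (Γ.Q u / Γ.normSqD u)

end WeightedGraph

end

/-!
Fix a finite edge set `W` and discard the vertices it touches. For a finite nonempty vertex set `X`
among the remaining ones, first shrink `X` to a connected part with no larger quotient
`#E_b(X)/m(X)`: the quotient of a disconnected set is a mediant of those of two parts with no edge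
between them. The subgraph `Y` of all edges incident to `X` is then connected and avoids `W`.
Counting each edge at its endpoints gives `m(X) ≤ 2 mes(Y)`, and since every vertex of `X` keeps
its full degree in `Y`, `deg(∂Y) ≤ #E_b(X)`. Hence `deg(∂Y)/mes(Y) ≤ 2 #E_b(X)/m(X)`.
-/

namespace SimpleGraph

variable {V : Type*} {G : SimpleGraph V}

lemma exists_partition_of_not_connected_induce {X : Finset V} (hX : X.Nonempty)
    (h : ¬(G.induce (X : Set V)).Connected) :
    ∃ A B : Finset V, A.Nonempty ∧ B.Nonempty ∧ Disjoint A B ∧ A ∪ B = X ∧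
      ∀ a ∈ A, ∀ b ∈ B, ¬G.Adj a b := by
  have : Nonempty (X : Set V) := hX.coe_sort
  obtain ⟨x, y, hxy⟩ : ∃ x y : (X : Set V), ¬(G.induce (X : Set V)).Reachable x y := by
    by_contra! hall
    exact h ⟨hall⟩
  set A := X.filter fun a => ∃ ha : a ∈ X, (G.induce (X : Set V)).Reachable x ⟨a, ha⟩
  have hAX : A ⊆ X := Finset.filter_subset _ _
  refine ⟨A, X \ A, ⟨x, ?_⟩, ⟨y, ?_⟩, Finset.disjoint_sdiff,
    Finset.union_sdiff_of_subset hAX, ?_⟩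
  · exact Finset.mem_filter.2 ⟨x.2, x.2, Reachable.refl _⟩
  · refine Finset.mem_sdiff.2 ⟨y.2, fun hy => hxy ?_⟩
    obtain ⟨_, _, hr⟩ := Finset.mem_filter.1 hy
    exact hr
  · intro a ha b hb hab
    obtain ⟨haX, _, hxa⟩ := Finset.mem_filter.1 ha
    obtain ⟨hbX, hbA⟩ := Finset.mem_sdiff.1 hb
    have hab' : (G.induce (X : Set V)).Adj ⟨a, haX⟩ ⟨b, hbX⟩ := hab
    exact hbA (Finset.mem_filter.2 ⟨hbX, hbX, hxa.trans hab'.reachable⟩)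

end SimpleGraph

lemma min_div_div_le_add_div_add {a b c d : ℝ} (hb : 0 < b) (hd : 0 < d) :
    min (a / b) (c / d) ≤ (a + c) / (b + d) := by
  rw [min_le_iff, div_le_div_iff₀ hb (by positivity), div_le_div_iff₀ hd (by positivity)]
  by_contra! h
  nlinarith [h.1, h.2]

noncomputable section

namespace MetricGraph

variable (Γ : MetricGraph)

def starF (v : Γ.V) : Finset Γ.E := (Γ.locfin v).toFinset

def incEdges (X : Finset Γ.V) : Finset Γ.E := X.biUnion Γ.starF

variable {Γ}

lemma mem_starF {v : Γ.V} {e : Γ.E} :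
    e ∈ Γ.starF v ↔ (Γ.ends e).1 = v ∨ (Γ.ends e).2 = v := by
  simp [starF]

lemma mem_incEdges {X : Finset Γ.V} {e : Γ.E} :
    e ∈ Γ.incEdges X ↔ (Γ.ends e).1 ∈ X ∨ (Γ.ends e).2 ∈ X := by
  simp only [incEdges, Finset.mem_biUnion, mem_starF]
  constructor
  · rintro ⟨v, hv, rfl | rfl⟩ <;> tauto
  · rintro (h | h)
    exacts [⟨_, h, Or.inl rfl⟩, ⟨_, h, Or.inr rfl⟩]

lemma mem_vertsOf {F : Finset Γ.E} {v : Γ.V} :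
    v ∈ Γ.vertsOf F ↔ ∃ e ∈ F, (Γ.ends e).1 = v ∨ (Γ.ends e).2 = v := by
  simp only [vertsOf, Finset.mem_union, Finset.mem_image]
  aesop

lemma incEdges_mono {X Y : Finset Γ.V} (h : X ⊆ Y) : Γ.incEdges X ⊆ Γ.incEdges Y :=
  Finset.biUnion_subset_biUnion_of_subset_left _ h

lemma disjoint_incEdges {X : Finset Γ.V} {W : Finset Γ.E}
    (h : (X : Set Γ.V) ⊆ (Γ.vertsOf W : Set Γ.V)ᶜ) : Disjoint (Γ.incEdges X) W := by
  refine Finset.disjoint_left.2 fun e heX heW => ?_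
  rcases mem_incEdges.1 heX with hX | hX
  · exact h hX (mem_vertsOf.2 ⟨e, heW, Or.inl rfl⟩)
  · exact h hX (mem_vertsOf.2 ⟨e, heW, Or.inr rfl⟩)

lemma graph_adj_iff {u v : Γ.V} :
    Γ.graph.Adj u v ↔ u ≠ v ∧ ((∃ e, Γ.ends e = (u, v)) ∨ ∃ e, Γ.ends e = (v, u)) :=
  SimpleGraph.fromRel_adj _ _ _

lemma graph_adj_ends (e : Γ.E) : Γ.graph.Adj (Γ.ends e).1 (Γ.ends e).2 :=
  graph_adj_iff.2 ⟨Γ.no_loops e, Or.inl ⟨e, rfl⟩⟩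

lemma starF_nonempty (v : Γ.V) : (Γ.starF v).Nonempty := by
  have := Γ.infV
  obtain ⟨w, hw⟩ := Γ.conn.preconnected.exists_adj_of_nontrivial v
  obtain ⟨-, ⟨e, he⟩ | ⟨e, he⟩⟩ := graph_adj_iff.1 hw
  · exact ⟨e, mem_starF.2 (Or.inl (by rw [he]))⟩
  · exact ⟨e, mem_starF.2 (Or.inr (by rw [he]))⟩

lemma incEdges_nonempty {X : Finset Γ.V} (hX : X.Nonempty) : (Γ.incEdges X).Nonempty := by
  obtain ⟨v, hv⟩ := hX
  obtain ⟨e, he⟩ := starF_nonempty v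
  exact ⟨e, Finset.mem_biUnion.2 ⟨v, hv, he⟩⟩

lemma mweight_pos (v : Γ.V) : 0 < Γ.mweight v :=
  Finset.sum_pos (fun e _ => Γ.len_pos e) (starF_nonempty v)

lemma sum_mweight_pos {X : Finset Γ.V} (hX : X.Nonempty) : 0 < ∑ v ∈ X, Γ.mweight v :=
  Finset.sum_pos (fun v _ => mweight_pos v) hX

lemma filter_incEdges_eq_starF {X : Finset Γ.V} {v : Γ.V} (hv : v ∈ X) :
    (Γ.incEdges X).filter (fun e => (Γ.ends e).1 = v ∨ (Γ.ends e).2 = v) = Γ.starF v := by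
  ext e
  rw [Finset.mem_filter, mem_incEdges, mem_starF]
  constructor
  · exact fun h => h.2
  · rintro (h | h) <;> rw [← h] at hv <;> tauto

lemma mem_Eb {S : Set Γ.V} {e : Γ.E} :
    e ∈ Γ.Eb S ↔ Xor ((Γ.ends e).1 ∈ S) ((Γ.ends e).2 ∈ S) :=
  Iff.rfl

lemma Eb_subset_incEdges (X : Finset Γ.V) : Γ.Eb ↑X ⊆ ↑(Γ.incEdges X) := by
  intro e he
  rw [Finset.mem_coe, mem_incEdges]
  rcases he with h | h
  exacts [Or.inl h.1, Or.inr h.1]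

lemma finite_Eb (X : Finset Γ.V) : (Γ.Eb ↑X).Finite :=
  (Γ.incEdges X).finite_toSet.subset (Eb_subset_incEdges X)

section Partition

variable {A B : Finset Γ.V} (hAB : Disjoint A B) (hadj : ∀ a ∈ A, ∀ b ∈ B, ¬Γ.graph.Adj a b)
include hAB hadj

lemma Eb_union : Γ.Eb ↑(A ∪ B) = Γ.Eb ↑A ∪ Γ.Eb ↑B := by
  ext e
  have h₁ : ¬((Γ.ends e).1 ∈ A ∧ (Γ.ends e).2 ∈ B) := fun h => hadj _ h.1 _ h.2 (graph_adj_ends e)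
  have h₂ : ¬((Γ.ends e).2 ∈ A ∧ (Γ.ends e).1 ∈ B) :=
    fun h => hadj _ h.1 _ h.2 (graph_adj_ends e).symm
  have hd : ∀ v, v ∈ A → v ∉ B := fun _ => (Finset.disjoint_left.1 hAB ·)
  simp only [mem_Eb, xor_def, Set.mem_union, Finset.coe_union, Finset.mem_coe]
  have := hd (Γ.ends e).1; have := hd (Γ.ends e).2; tauto

lemma disjoint_Eb : Disjoint (Γ.Eb ↑A) (Γ.Eb ↑B) := by
  refine Set.disjoint_left.2 fun e hA hB => ?_
  have h₁ : ¬((Γ.ends e).1 ∈ A ∧ (Γ.ends e).2 ∈ B) := fun h => hadj _ h.1 _ h.2 (graph_adj_ends e)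
  have h₂ : ¬((Γ.ends e).2 ∈ A ∧ (Γ.ends e).1 ∈ B) :=
    fun h => hadj _ h.1 _ h.2 (graph_adj_ends e).symm
  have hd : ∀ v, v ∈ A → v ∉ B := fun _ => (Finset.disjoint_left.1 hAB ·)
  simp only [mem_Eb, xor_def, Finset.mem_coe] at hA hB
  have := hd (Γ.ends e).1; have := hd (Γ.ends e).2; tauto

end Partition

variable (Γ) in
/-- The quotient whose infimum over nonempty `X ⊆ U` is `α_d(U)`. -/
def isoRatio (X : Finset Γ.V) : ℝ := ((Γ.Eb ↑X).ncard : ℝ) / ∑ v ∈ X, Γ.mweight v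

lemma min_isoRatio_le_isoRatio_union {A B : Finset Γ.V} (hA : A.Nonempty) (hB : B.Nonempty)
    (hAB : Disjoint A B) (hadj : ∀ a ∈ A, ∀ b ∈ B, ¬Γ.graph.Adj a b) :
    min (Γ.isoRatio A) (Γ.isoRatio B) ≤ Γ.isoRatio (A ∪ B) := by
  have hcard : (Γ.Eb ↑(A ∪ B)).ncard = (Γ.Eb ↑A).ncard + (Γ.Eb ↑B).ncard := by
    rw [Eb_union hAB hadj, Set.ncard_union_eq (disjoint_Eb hAB hadj) (finite_Eb A) (finite_Eb B)]
  unfold isoRatio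
  rw [hcard, Finset.sum_union hAB, Nat.cast_add]
  exact min_div_div_le_add_div_add (sum_mweight_pos hA) (sum_mweight_pos hB)

lemma exists_connected_subset_isoRatio_le {X : Finset Γ.V} (hX : X.Nonempty) :
    ∃ Y ⊆ X, Y.Nonempty ∧ (Γ.graph.induce (Y : Set Γ.V)).Connected ∧
      Γ.isoRatio Y ≤ Γ.isoRatio X := by
  induction X using Finset.strongInduction with
  | H X ih =>
    by_cases hconn : (Γ.graph.induce (X : Set Γ.V)).Connected
    · exact ⟨X, subset_rfl, hX, hconn, le_rfl⟩
    obtain ⟨A, B, hA, hB, hAB, rfl, hadj⟩ :=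
      SimpleGraph.exists_partition_of_not_connected_induce hX hconn
    rcases min_le_iff.1 (min_isoRatio_le_isoRatio_union hA hB hAB hadj) with h | h
    · have hAB' : A ⊂ A ∪ B :=
        Finset.union_comm B A ▸ hAB.symm.right_lt_sup_of_left_ne_bot hB.ne_empty
      obtain ⟨Y, hYA, hY, hYc, hYr⟩ := ih A hAB' hA
      exact ⟨Y, hYA.trans Finset.subset_union_left, hY, hYc, hYr.trans h⟩
    · obtain ⟨Y, hYB, hY, hYc, hYr⟩ :=
        ih B (hAB.right_lt_sup_of_left_ne_bot hA.ne_empty) hB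
      exact ⟨Y, hYB.trans Finset.subset_union_right, hY, hYc, hYr.trans h⟩

lemma subset_vertsOf_incEdges (X : Finset Γ.V) : X ⊆ Γ.vertsOf (Γ.incEdges X) := by
  intro v hv
  obtain ⟨e, he⟩ := starF_nonempty v
  exact mem_vertsOf.2 ⟨e, Finset.mem_biUnion.2 ⟨v, hv, he⟩, mem_starF.1 he⟩

/-- Every vertex of the subgraph lies on an edge joining it to `X`, so gluing these edges onto the
connected set `X` keeps it connected. -/
lemma subConn_incEdges {X : Finset Γ.V} (hX : (Γ.graph.induce (X : Set Γ.V)).Connected) :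
    Γ.SubConn (Γ.incEdges X) := by
  set F := Γ.incEdges X
  set H := SimpleGraph.fromRel fun u v => ∃ e ∈ F, Γ.ends e = (u, v)
  have hH : ∀ e ∈ F, H.Adj (Γ.ends e).1 (Γ.ends e).2 := fun e he =>
    (SimpleGraph.fromRel_adj _ _ _).2 ⟨Γ.no_loops e, Or.inl ⟨e, he, rfl⟩⟩
  have hXH : (H.induce (X : Set Γ.V)).Connected := by
    refine hX.mono fun a b hab => ?_
    obtain ⟨-, ⟨e, he⟩ | ⟨e, he⟩⟩ := graph_adj_iff.1 (SimpleGraph.induce_adj.1 hab)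
    · have heF : e ∈ F := mem_incEdges.2 (Or.inl (by rw [he]; exact a.2))
      simpa [he] using hH e heF
    · have heF : e ∈ F := mem_incEdges.2 (Or.inl (by rw [he]; exact b.2))
      simpa [he] using (hH e heF).symm
  obtain ⟨⟨u, hu⟩⟩ := hXH.nonempty
  refine SimpleGraph.induce_connected_of_patches u (subset_vertsOf_incEdges X hu) fun {v} hv => ?_
  obtain ⟨e, heF, hve⟩ := mem_vertsOf.1 hv
  let s : Set Γ.V := ↑X ∪ {(Γ.ends e).1, (Γ.ends e).2}
  have hs : (H.induce s).Connected := by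
    refine SimpleGraph.induce_union_connected hXH.preconnected
      (SimpleGraph.induce_pair_connected_of_adj (hH e heF)).preconnected ?_
    rcases mem_incEdges.1 heF with h | h
    exacts [⟨_, h, Or.inl rfl⟩, ⟨_, h, Or.inr rfl⟩]
  have hsF : s ⊆ Γ.vertsOf F := by
    rintro w (hw | rfl | rfl)
    · exact subset_vertsOf_incEdges X hw
    exacts [mem_vertsOf.2 ⟨e, heF, Or.inl rfl⟩, mem_vertsOf.2 ⟨e, heF, Or.inr rfl⟩]
  have hvs : v ∈ s := by rcases hve with rfl | rfl <;> simp [s]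
  exact ⟨s, hsF, Or.inl hu, hvs, hs.preconnected _ _⟩

lemma sum_mweight_le_two_mes (X : Finset Γ.V) :
    ∑ v ∈ X, Γ.mweight v ≤ 2 * Γ.mes (Γ.incEdges X) := by
  set F := Γ.incEdges X
  let r : Γ.V → Γ.E → Prop := fun v e => (Γ.ends e).1 = v ∨ (Γ.ends e).2 = v
  have hcard : ∀ e, (X.bipartiteBelow r e).card ≤ 2 := fun e => by
    refine (Finset.card_le_card (t := {(Γ.ends e).1, (Γ.ends e).2}) fun v hv => ?_).trans
      Finset.card_le_two
    rcases ((Finset.mem_bipartiteBelow r).1 hv).2 with rfl | rfl <;> simp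
  calc ∑ v ∈ X, Γ.mweight v = ∑ v ∈ X, ∑ e ∈ F.bipartiteAbove r v, Γ.len e :=
        Finset.sum_congr rfl fun v hv => by
          rw [Finset.bipartiteAbove, filter_incEdges_eq_starF hv, mweight, starF]
    _ = ∑ e ∈ F, (X.bipartiteBelow r e).card • Γ.len e := by
        rw [Finset.sum_sum_bipartiteAbove_eq_sum_sum_bipartiteBelow]
        simp only [Finset.sum_const]
    _ ≤ ∑ e ∈ F, 2 * Γ.len e := Finset.sum_le_sum fun e _ => by
        rw [nsmul_eq_mul]
        gcongr
        · exact (Γ.len_pos e).le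
        · exact_mod_cast hcard e
    _ = 2 * Γ.mes F := by rw [mes, Finset.mul_sum]

lemma degIn_incEdges_of_mem {X : Finset Γ.V} {v : Γ.V} (hv : v ∈ X) :
    Γ.degIn (Γ.incEdges X) v = Γ.degree v := by
  rw [degIn, filter_incEdges_eq_starF hv, starF, degree]

lemma mem_Eb_of_mem_incEdges {X : Finset Γ.V} {e : Γ.E} {v : Γ.V} (he : e ∈ Γ.incEdges X)
    (hv : v ∉ X) (hve : (Γ.ends e).1 = v ∨ (Γ.ends e).2 = v) : e ∈ Γ.Eb ↑X := by
  rw [mem_incEdges] at he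
  rw [mem_Eb, xor_def, Finset.mem_coe, Finset.mem_coe]
  rcases hve with rfl | rfl <;> tauto

lemma eq_of_mem_incEdges {X : Finset Γ.V} {e : Γ.E} {u w : Γ.V} (he : e ∈ Γ.incEdges X)
    (hu : u ∉ X) (hw : w ∉ X) (hue : (Γ.ends e).1 = u ∨ (Γ.ends e).2 = u)
    (hwe : (Γ.ends e).1 = w ∨ (Γ.ends e).2 = w) : u = w := by
  rw [mem_incEdges] at he
  rcases hue with rfl | rfl <;> rcases hwe with rfl | rfl <;> tauto

/-- All boundary vertices of the subgraph lie outside `X`, and the edges at them are boundary edges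
of `X`, each met at one boundary vertex only. -/
lemma degBdry_incEdges_le (X : Finset Γ.V) :
    Γ.degBdry (Γ.incEdges X) ≤ (Γ.Eb ↑X).ncard := by
  set F := Γ.incEdges X
  let S : Γ.V → Finset Γ.E := fun v => F.filter fun e => (Γ.ends e).1 = v ∨ (Γ.ends e).2 = v
  have hout : ∀ v ∈ Γ.bdry F, v ∉ X := fun v hv hvX =>
    (Finset.mem_filter.1 hv).2.ne (degIn_incEdges_of_mem hvX)
  have hdisj : (Γ.bdry F : Set Γ.V).PairwiseDisjoint S := fun u hu w hw huw =>
    Finset.disjoint_left.2 fun e heu hew => huw <|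
      eq_of_mem_incEdges (Finset.mem_filter.1 heu).1 (hout u hu) (hout w hw)
        (Finset.mem_filter.1 heu).2 (Finset.mem_filter.1 hew).2
  have hsub : ((Γ.bdry F).biUnion S : Set Γ.E) ⊆ Γ.Eb ↑X := by
    intro e he
    obtain ⟨v, hv, hev⟩ := Finset.mem_biUnion.1 he
    exact mem_Eb_of_mem_incEdges (Finset.mem_filter.1 hev).1 (hout v hv)
      (Finset.mem_filter.1 hev).2
  calc Γ.degBdry F = ((Γ.bdry F).biUnion S).card := by
        rw [Finset.card_biUnion hdisj, degBdry]
        push_cast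
        rfl
    _ ≤ (Γ.Eb ↑X).ncard := by
        rw [← Set.ncard_coe_finset]
        exact_mod_cast Set.ncard_le_ncard hsub (finite_Eb X)

lemma exists_isFinSubgraph_le_two_mul_isoRatio {X : Finset Γ.V} (hX : X.Nonempty) :
    ∃ F ⊆ Γ.incEdges X, Γ.IsFinSubgraph F ∧ Γ.degBdry F / Γ.mes F ≤ 2 * Γ.isoRatio X := by
  obtain ⟨Y, hYX, hY, hYc, hYr⟩ := exists_connected_subset_isoRatio_le hX
  refine ⟨Γ.incEdges Y, incEdges_mono hYX, ⟨incEdges_nonempty hY, subConn_incEdges hYc⟩, ?_⟩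
  have hm := sum_mweight_pos hY
  calc Γ.degBdry (Γ.incEdges Y) / Γ.mes (Γ.incEdges Y)
      ≤ (Γ.Eb ↑Y).ncard / ((∑ v ∈ Y, Γ.mweight v) / 2) :=
        div_le_div₀ (Nat.cast_nonneg _) (degBdry_incEdges_le Y) (by positivity)
          (by linarith [sum_mweight_le_two_mes Y])
    _ = 2 * Γ.isoRatio Y := by rw [isoRatio]; field_simp
    _ ≤ 2 * Γ.isoRatio X := by linarith

lemma iInf_degBdry_div_mes_le_two_mul_alphaD (W : Finset Γ.E) :
    ⨅ (F : Finset Γ.E) (_ : Γ.IsFinSubgraph F ∧ Disjoint F W),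
        ENNReal.ofReal (Γ.degBdry F / Γ.mes F) ≤
      2 * ENNReal.ofReal (Γ.alphaD (Γ.vertsOf W : Set Γ.V)ᶜ) := by
  set T := {r : ℝ | ∃ X : Finset Γ.V, ↑X ⊆ (Γ.vertsOf W : Set Γ.V)ᶜ ∧ X.Nonempty ∧
    r = ((Γ.Eb ↑X).ncard : ℝ) / ∑ v ∈ X, Γ.mweight v}
  have : Nonempty T := by
    have := Γ.infV
    obtain ⟨v, hv⟩ := Infinite.exists_notMem_finset (Γ.vertsOf W)
    exact ⟨_, {v}, by simpa using hv, Finset.singleton_nonempty v, rfl⟩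
  rw [alphaD, sInf_eq_iInf', ENNReal.ofReal_iInf, ENNReal.mul_iInf_of_ne two_ne_zero
    ENNReal.ofNat_ne_top]
  refine le_iInf fun ⟨r, X, hXW, hX, hr⟩ => ?_
  obtain ⟨F, hFX, hF, hFr⟩ := exists_isFinSubgraph_le_two_mul_isoRatio hX
  calc _ ≤ ENNReal.ofReal (Γ.degBdry F / Γ.mes F) :=
        iInf₂_le F ⟨hF, (disjoint_incEdges hXW).mono_left hFX⟩
    _ ≤ ENNReal.ofReal (2 * r) := ENNReal.ofReal_le_ofReal (hr ▸ hFr)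
    _ = 2 * ENNReal.ofReal r := by rw [ENNReal.ofReal_mul zero_le_two, ENNReal.ofReal_ofNat]

end MetricGraph

end

/-- **Lemma 4.1 (first essential inequality).** `α_ess(G) ≤ 2·α_d^ess(V)`,
as an inequality in `[0,∞]`. -/
theorem alphaEss_le_two_mul_alphaDEss (Γ : MetricGraph) :
    Γ.alphaEssEnn ≤ 2 * Γ.alphaDEssEnn :=
  iSup_le fun W => (Γ.iInf_degBdry_div_mes_le_two_mul_alphaD W).trans <| by
    gcongr
    exact le_iSup (fun X : Finset Γ.V => ENNReal.ofReal (Γ.alphaD (X : Set Γ.V)ᶜ)) _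
end

section
/- (Lemma 4.1, second essential inequality) The isoperimetric constants at infinity satisfy 2/α_ess(G) ≤ 1/α_d^ess(V) + ℓ*_ess(G), as an inequality in [0,∞] with the conventions 1/0 = +∞ and 1/∞ = 0. -/
open scoped Classical ENNReal
open MeasureTheory

section Aux

namespace MetricGraph

variable (Γ : MetricGraph)

/-- Incidence filter of a vertex inside an edge set. -/
private noncomputable def inc (F : Finset Γ.E) (v : Γ.V) : Finset Γ.E :=
  F.filter fun e => (Γ.ends e).1 = v ∨ (Γ.ends e).2 = v

lemma degIn_eq_card_inc (F : Finset Γ.E) (v : Γ.V) : Γ.degIn F v = (Γ.inc F v).card := rfl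

lemma mem_vertsOf_fst {F : Finset Γ.E} {e : Γ.E} (he : e ∈ F) :
    (Γ.ends e).1 ∈ Γ.vertsOf F := by
  exact Finset.mem_union_left _ (Finset.mem_image_of_mem _ he)

lemma mem_vertsOf_snd {F : Finset Γ.E} {e : Γ.E} (he : e ∈ F) :
    (Γ.ends e).2 ∈ Γ.vertsOf F := by
  exact Finset.mem_union_right _ (Finset.mem_image_of_mem _ he)

lemma exists_edge_of_mem_vertsOf {F : Finset Γ.E} {v : Γ.V} (hv : v ∈ Γ.vertsOf F) :
    ∃ e ∈ F, (Γ.ends e).1 = v ∨ (Γ.ends e).2 = v := by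
  rcases Finset.mem_union.1 hv with h | h <;> rcases Finset.mem_image.1 h with ⟨e, he, hev⟩
  · exact ⟨e, he, Or.inl hev⟩
  · exact ⟨e, he, Or.inr hev⟩

lemma inc_subset_locfin (F : Finset Γ.E) (v : Γ.V) :
    Γ.inc F v ⊆ (Γ.locfin v).toFinset := by
  intro e he
  rw [Set.Finite.mem_toFinset]
  exact (Finset.mem_filter.1 he).2

lemma degIn_le_degree (F : Finset Γ.E) (v : Γ.V) : Γ.degIn F v ≤ Γ.degree v :=
  Finset.card_le_card (Γ.inc_subset_locfin F v)

lemma inc_eq_locfin_of_full {F : Finset Γ.E} {v : Γ.V} (h : Γ.degIn F v = Γ.degree v) :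
    Γ.inc F v = (Γ.locfin v).toFinset :=
  Finset.eq_of_subset_of_card_le (Γ.inc_subset_locfin F v) (le_of_eq h.symm)

/-- Double counting: summing edge lengths over vertex stars counts each edge twice. -/
lemma double_count (F : Finset Γ.E) :
    ∑ v ∈ Γ.vertsOf F, ∑ e ∈ Γ.inc F v, Γ.len e = 2 * Γ.mes F := by
  have : ∀ v ∈ Γ.vertsOf F, ∑ e ∈ Γ.inc F v, Γ.len e
      = ∑ e ∈ F, if (Γ.ends e).1 = v ∨ (Γ.ends e).2 = v then Γ.len e else 0 := by
    intro v _
    simp [inc, Finset.sum_filter]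
  rw [Finset.sum_congr rfl this, Finset.sum_comm]
  rw [mes, Finset.mul_sum, Finset.sum_congr rfl]
  intro e he
  have h1 : (Γ.ends e).1 ∈ Γ.vertsOf F := Γ.mem_vertsOf_fst he
  have h2 : (Γ.ends e).2 ∈ Γ.vertsOf F := Γ.mem_vertsOf_snd he
  have hne : (Γ.ends e).1 ≠ (Γ.ends e).2 := Γ.no_loops e
  have hsub : {(Γ.ends e).1, (Γ.ends e).2} ⊆ Γ.vertsOf F := by
    intro x hx
    rcases Finset.mem_insert.1 hx with h | h
    · exact h ▸ h1
    · exact (Finset.mem_singleton.1 h) ▸ h2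
  rw [← Finset.sum_subset hsub]
  · rw [Finset.sum_pair hne]
    simp [two_mul]
  · intro x _ hx
    rw [if_neg]
    intro hc
    apply hx
    rcases hc with h | h
    · exact Finset.mem_insert.2 (Or.inl h.symm)
    · exact Finset.mem_insert.2 (Or.inr (Finset.mem_singleton.2 h.symm))

lemma degBdry_nonneg (F : Finset Γ.E) : 0 ≤ Γ.degBdry F :=
  Finset.sum_nonneg fun _ _ => Nat.cast_nonneg _

lemma mweight_nonneg (v : Γ.V) : 0 ≤ Γ.mweight v :=
  Finset.sum_nonneg fun e _ => (Γ.len_pos e).le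

/-- Key estimate: for a finite nonempty subgraph `F` whose edges all have length at
most `ℓ` and avoid all edges incident to `X₀`, we have
`2 mes F ≤ degBdry F * (ℓ + 1/a)` whenever `0 < a ≤ α_d((X₀)ᶜ)`. -/
lemma key_estimate (X₀ : Finset Γ.V) (F : Finset Γ.E) (ℓ a : ℝ)
    (hF : F.Nonempty) (hℓ0 : 0 ≤ ℓ) (hlen : ∀ e ∈ F, Γ.len e ≤ ℓ)
    (hX : ∀ e ∈ F, ∀ v ∈ X₀, ¬((Γ.ends e).1 = v ∨ (Γ.ends e).2 = v))
    (ha : 0 < a) (haD : a ≤ Γ.alphaD (↑X₀ : Set Γ.V)ᶜ) :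
    2 * Γ.mes F ≤ Γ.degBdry F * (ℓ + 1 / a) := by
  classical
  set Int : Finset Γ.V := (Γ.vertsOf F).filter (fun v => ¬ Γ.degIn F v < Γ.degree v) with hInt
  -- split the double count
  have hsplit : 2 * Γ.mes F
      = (∑ v ∈ Γ.bdry F, ∑ e ∈ Γ.inc F v, Γ.len e)
        + ∑ v ∈ Int, ∑ e ∈ Γ.inc F v, Γ.len e := by
    rw [← Γ.double_count F, bdry, hInt,
      Finset.sum_filter_add_sum_filter_not]
  -- boundary part
  have hbd : (∑ v ∈ Γ.bdry F, ∑ e ∈ Γ.inc F v, Γ.len e) ≤ Γ.degBdry F * ℓ := by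
    rw [degBdry, Finset.sum_mul]
    apply Finset.sum_le_sum
    intro v _
    have := Finset.sum_le_card_nsmul (Γ.inc F v) Γ.len ℓ
      (fun e he => hlen e (Finset.mem_filter.1 he).1)
    rwa [nsmul_eq_mul, ← degIn_eq_card_inc] at this
  -- interior membership facts
  have hIntFull : ∀ v ∈ Int, Γ.degIn F v = Γ.degree v := by
    intro v hv
    have hv' := (Finset.mem_filter.1 hv).2
    exact le_antisymm (Γ.degIn_le_degree F v) (not_lt.1 hv')
  have hIntInc : ∀ v ∈ Int, Γ.inc F v = (Γ.locfin v).toFinset := fun v hv =>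
    Γ.inc_eq_locfin_of_full (hIntFull v hv)
  have hint : (∑ v ∈ Int, ∑ e ∈ Γ.inc F v, Γ.len e) = ∑ v ∈ Int, Γ.mweight v := by
    apply Finset.sum_congr rfl
    intro v hv
    rw [hIntInc v hv]
    rfl
  -- now two cases on Int
  rcases Int.eq_empty_or_nonempty with hie | hne
  · have : 2 * Γ.mes F ≤ Γ.degBdry F * ℓ := by
      rw [hsplit, hie]
      simpa using hbd
    calc 2 * Γ.mes F ≤ Γ.degBdry F * ℓ := this
      _ ≤ Γ.degBdry F * (ℓ + 1 / a) := by
          apply mul_le_mul_of_nonneg_left _ (Γ.degBdry_nonneg F)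
          have : (0:ℝ) ≤ 1 / a := by positivity
          linarith
  · -- interior nonempty
    set M : ℝ := ∑ v ∈ Int, Γ.mweight v with hM
    set N : ℝ := ((Γ.Eb (↑Int : Set Γ.V)).ncard : ℝ) with hN
    -- Int avoids X₀
    have hIntX : (↑Int : Set Γ.V) ⊆ (↑X₀ : Set Γ.V)ᶜ := by
      intro v hv
      have hv' : v ∈ Int := hv
      have hvF : v ∈ Γ.vertsOf F := (Finset.mem_filter.1 hv').1
      intro hvx
      obtain ⟨e, he, hev⟩ := Γ.exists_edge_of_mem_vertsOf hvF
      exact hX e he v (by exact_mod_cast hvx) hev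
    -- M > 0
    have hMpos : 0 < M := by
      obtain ⟨v, hv⟩ := hne
      obtain ⟨e, he, hev⟩ := Γ.exists_edge_of_mem_vertsOf (Finset.mem_filter.1 hv).1
      have hevm : e ∈ (Γ.locfin v).toFinset := Set.Finite.mem_toFinset _ |>.2 hev
      have h1 : Γ.len e ≤ Γ.mweight v :=
        Finset.single_le_sum (fun e _ => (Γ.len_pos e).le) hevm
      have h2 : Γ.mweight v ≤ M :=
        Finset.single_le_sum (fun w _ => Γ.mweight_nonneg w) hv
      linarith [Γ.len_pos e]
    -- alphaD ≤ N / M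
    have halpha : Γ.alphaD (↑X₀ : Set Γ.V)ᶜ ≤ N / M := by
      apply csInf_le
      · refine ⟨0, ?_⟩
        rintro r ⟨X, _, _, rfl⟩
        exact div_nonneg (Nat.cast_nonneg _)
          (Finset.sum_nonneg fun w _ => Γ.mweight_nonneg w)
      · exact ⟨Int, hIntX, hne, rfl⟩
    -- N ≤ degBdry F
    have hNbd : N ≤ Γ.degBdry F := by
      have hsub : Γ.Eb (↑Int : Set Γ.V) ⊆
          ↑((Γ.bdry F).biUnion fun v => Γ.inc F v) := by
        intro e he
        have key : ∀ u w : Γ.V, Γ.ends e = (u, w) → u ∈ Int → w ∉ Int →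
            ∃ v ∈ Γ.bdry F, e ∈ Γ.inc F v := by
          intro u w hends hu hw
          have heinc : e ∈ Γ.inc F u := by
            rw [hIntInc u hu, Set.Finite.mem_toFinset]
            left; rw [hends]
          have heF : e ∈ F := (Finset.mem_filter.1 heinc).1
          have hwv : w ∈ Γ.vertsOf F := by
            have := Γ.mem_vertsOf_snd heF
            rwa [hends] at this
          have hwb : w ∈ Γ.bdry F := by
            rw [bdry, Finset.mem_filter]
            refine ⟨hwv, ?_⟩
            by_contra hc
            exact hw (Finset.mem_filter.2 ⟨hwv, hc⟩)
          refine ⟨w, hwb, Finset.mem_filter.2 ⟨heF, Or.inr ?_⟩⟩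
          rw [hends]
        rcases he with ⟨h1, h2⟩ | ⟨h2, h1⟩
        · obtain ⟨v, hv, hev⟩ := key (Γ.ends e).1 (Γ.ends e).2 rfl
            (by exact_mod_cast h1) (by simpa using h2)
          simpa using Finset.mem_biUnion.2 ⟨v, hv, hev⟩
        · -- second endpoint in Int, first not
          have key' : ∃ v ∈ Γ.bdry F, e ∈ Γ.inc F v := by
            have hu : (Γ.ends e).2 ∈ Int := by exact_mod_cast h2
            have heinc : e ∈ Γ.inc F (Γ.ends e).2 := by
              rw [hIntInc _ hu, Set.Finite.mem_toFinset]
              right; rfl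
            have heF : e ∈ F := (Finset.mem_filter.1 heinc).1
            have hwv : (Γ.ends e).1 ∈ Γ.vertsOf F := Γ.mem_vertsOf_fst heF
            have hw : (Γ.ends e).1 ∉ Int := by simpa using h1
            have hwb : (Γ.ends e).1 ∈ Γ.bdry F := by
              rw [bdry, Finset.mem_filter]
              refine ⟨hwv, ?_⟩
              by_contra hc
              exact hw (Finset.mem_filter.2 ⟨hwv, hc⟩)
            exact ⟨_, hwb, Finset.mem_filter.2 ⟨heF, Or.inl rfl⟩⟩
          obtain ⟨v, hv, hev⟩ := key'
          simpa using Finset.mem_biUnion.2 ⟨v, hv, hev⟩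
      have h1 : (Γ.Eb (↑Int : Set Γ.V)).ncard
          ≤ ((Γ.bdry F).biUnion fun v => Γ.inc F v).card := by
        have := Set.ncard_le_ncard hsub (Finset.finite_toSet _)
        rwa [Set.ncard_coe_finset] at this
      have h2 : ((Γ.bdry F).biUnion fun v => Γ.inc F v).card
          ≤ ∑ v ∈ Γ.bdry F, Γ.degIn F v := Finset.card_biUnion_le
      rw [hN, degBdry]
      exact_mod_cast le_trans h1 (by exact_mod_cast h2)
    -- conclude
    have hMN : M ≤ N / a := by
      have h1 : a ≤ N / M := le_trans haD halpha
      rw [le_div_iff₀ hMpos] at h1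
      rw [le_div_iff₀ ha]
      linarith
    have : 2 * Γ.mes F ≤ Γ.degBdry F * ℓ + N / a := by
      rw [hsplit]
      have := hint
      linarith
    have hNdiv : N / a ≤ Γ.degBdry F / a := div_le_div_of_nonneg_right hNbd ha.le
    calc 2 * Γ.mes F ≤ Γ.degBdry F * ℓ + N / a := this
      _ ≤ Γ.degBdry F * ℓ + Γ.degBdry F / a := by linarith
      _ = Γ.degBdry F * (ℓ + 1 / a) := by ring

end MetricGraph

end Aux

/-- **Lemma 4.1 (second essential inequality).**
`2/α_ess(G) ≤ 1/α_d^ess(V) + ℓ*_ess(G)`, in `[0,∞]`, with the conventions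
`1/0 = +∞` and `1/∞ = 0`. -/
theorem two_div_alphaEss_le (Γ : MetricGraph) :
    2 / Γ.alphaEssEnn ≤ 1 / Γ.alphaDEssEnn + Γ.ellSupEssEnn := by
  classical
  apply ENNReal.le_of_forall_pos_le_add
  intro ε hε hfin
  set A := Γ.alphaDEssEnn with hA_def
  set L := Γ.ellSupEssEnn with hL_def
  have hA0 : A ≠ 0 := by
    intro h
    rw [h] at hfin
    simp at hfin
  have hLtop : L ≠ ∞ := by
    intro h
    rw [h] at hfin
    simp at hfin
  have hεE : (0 : ℝ≥0∞) < (ε : ℝ≥0∞) := by exact_mod_cast hε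
  have hε2 : ((ε : ℝ≥0∞) / 2) ≠ 0 := by
    simp only [ne_eq, ENNReal.div_eq_zero_iff]
    push_neg
    exact ⟨hεE.ne', by norm_num⟩
  have hε2top : ((ε : ℝ≥0∞) / 2) ≠ ∞ := by
    exact (ENNReal.div_lt_top ENNReal.coe_ne_top (by norm_num)).ne
  -- Step 1: choose X₀ and a positive real `a ≤ α_d((X₀)ᶜ)` with `ofReal (1/a) ≤ 1/A + ε/2`.
  have hAinv_top : A⁻¹ ≠ ∞ := by
    rwa [ne_eq, ENNReal.inv_eq_top]
  have htpos : (0 : ℝ≥0∞) < (A⁻¹ + (ε : ℝ≥0∞) / 2)⁻¹ := by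
    rw [ENNReal.inv_pos]
    exact ENNReal.add_ne_top.2 ⟨hAinv_top, hε2top⟩
  have htlt : (A⁻¹ + (ε : ℝ≥0∞) / 2)⁻¹ < A := by
    conv_rhs => rw [← inv_inv A]
    exact ENNReal.inv_lt_inv.2 (ENNReal.lt_add_right hAinv_top hε2)
  obtain ⟨X₀, hX₀⟩ : ∃ X₀ : Finset Γ.V,
      (A⁻¹ + (ε : ℝ≥0∞) / 2)⁻¹ < ENNReal.ofReal (Γ.alphaD (↑X₀ : Set Γ.V)ᶜ) := by
    rw [hA_def, MetricGraph.alphaDEssEnn] at htlt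
    exact lt_iSup_iff.1 htlt
  set a : ℝ := Γ.alphaD (↑X₀ : Set Γ.V)ᶜ with ha_def
  have hapos : 0 < a := by
    by_contra h
    rw [ENNReal.ofReal_eq_zero.2 (not_lt.1 h)] at hX₀
    exact absurd hX₀ (not_lt.2 htpos.le)
  have hainv : ENNReal.ofReal (1 / a) ≤ A⁻¹ + (ε : ℝ≥0∞) / 2 := by
    rw [one_div, ENNReal.ofReal_inv_of_pos hapos]
    calc (ENNReal.ofReal a)⁻¹ ≤ ((A⁻¹ + (ε : ℝ≥0∞) / 2)⁻¹)⁻¹ :=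
          ENNReal.inv_le_inv.2 hX₀.le
      _ = A⁻¹ + (ε : ℝ≥0∞) / 2 := inv_inv _
  -- Step 2: choose W₀ and a real `ℓ` bounding lengths outside W₀, with `ofReal ℓ ≤ L + ε/2`.
  have hLlt : L < L + (ε : ℝ≥0∞) / 2 := ENNReal.lt_add_right hLtop hε2
  obtain ⟨W₀, hW₀⟩ : ∃ W₀ : Finset Γ.E,
      (⨆ e : {e : Γ.E // e ∉ W₀}, ENNReal.ofReal (Γ.len (e : Γ.E))) < L + (ε : ℝ≥0∞) / 2 := by
    have := hLlt
    rw [hL_def, MetricGraph.ellSupEssEnn] at this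
    exact iInf_lt_iff.1 (lt_of_le_of_lt (le_of_eq rfl) this)
  set ℓ : ℝ := (L + (ε : ℝ≥0∞) / 2).toReal with hℓ_def
  have hLεtop : L + (ε : ℝ≥0∞) / 2 ≠ ∞ := ENNReal.add_ne_top.2 ⟨hLtop, hε2top⟩
  have hℓ0 : 0 ≤ ℓ := ENNReal.toReal_nonneg
  have hofℓ : ENNReal.ofReal ℓ = L + (ε : ℝ≥0∞) / 2 := ENNReal.ofReal_toReal hLεtop
  have hlen : ∀ e : Γ.E, e ∉ W₀ → Γ.len e ≤ ℓ := by
    intro e he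
    have h1 : ENNReal.ofReal (Γ.len e) ≤ L + (ε : ℝ≥0∞) / 2 := by
      refine le_trans ?_ hW₀.le
      exact le_iSup (fun e : {e : Γ.E // e ∉ W₀} => ENNReal.ofReal (Γ.len (e : Γ.E))) ⟨e, he⟩
    exact (ENNReal.ofReal_le_iff_le_toReal hLεtop).1 h1
  -- Step 3: the combined excluded edge set.
  set W : Finset Γ.E := W₀ ∪ X₀.biUnion (fun v => (Γ.locfin v).toFinset) with hW_def
  set c : ℝ := ℓ + 1 / a with hc_def
  have hcpos : 0 < c := by
    have : 0 < 1 / a := by positivity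
    rw [hc_def]; linarith
  -- Step 4: lower bound for alphaEssEnn.
  have hbound : ENNReal.ofReal (2 / c) ≤ Γ.alphaEssEnn := by
    rw [MetricGraph.alphaEssEnn]
    refine le_iSup_of_le W ?_
    refine le_iInf fun F => le_iInf fun hF => ?_
    obtain ⟨⟨hFne, _⟩, hdisj⟩ := hF
    have hmes : 0 < Γ.mes F := Finset.sum_pos (fun e _ => Γ.len_pos e) hFne
    have hlenF : ∀ e ∈ F, Γ.len e ≤ ℓ := by
      intro e heF
      refine hlen e fun heW₀ => ?_
      exact (Finset.disjoint_left.1 hdisj) heF (Finset.mem_union_left _ heW₀)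
    have hXF : ∀ e ∈ F, ∀ v ∈ X₀, ¬((Γ.ends e).1 = v ∨ (Γ.ends e).2 = v) := by
      intro e heF v hv hinc
      apply (Finset.disjoint_left.1 hdisj) heF
      apply Finset.mem_union_right
      exact Finset.mem_biUnion.2 ⟨v, hv, Set.Finite.mem_toFinset _ |>.2 hinc⟩
    have hkey := Γ.key_estimate X₀ F ℓ a hFne hℓ0 hlenF hXF hapos (le_of_eq ha_def.symm)
    apply ENNReal.ofReal_le_ofReal
    rw [div_le_div_iff₀ hcpos hmes]
    rw [hc_def]
    linarith
  -- Step 5: conclude.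
  have h1 : 2 / Γ.alphaEssEnn ≤ 2 / ENNReal.ofReal (2 / c) :=
    ENNReal.div_le_div_left hbound 2
  have h2 : 2 / ENNReal.ofReal (2 / c) ≤ ENNReal.ofReal c := by
    have hne0 : ENNReal.ofReal (2 / c) ≠ 0 := by
      simp only [ne_eq, ENNReal.ofReal_eq_zero, not_le]
      positivity
    have hnetop : ENNReal.ofReal (2 / c) ≠ ∞ := ENNReal.ofReal_ne_top
    rw [ENNReal.div_le_iff_le_mul (Or.inl hne0) (Or.inl hnetop)]
    have : ENNReal.ofReal c * ENNReal.ofReal (2 / c) = ENNReal.ofReal 2 := by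
      rw [← ENNReal.ofReal_mul hcpos.le]
      congr 1
      field_simp
    rw [this]
    norm_num
  have h3 : ENNReal.ofReal c ≤ 1 / A + L + (ε : ℝ≥0∞) := by
    rw [hc_def, ENNReal.ofReal_add hℓ0 (by positivity)]
    calc ENNReal.ofReal ℓ + ENNReal.ofReal (1 / a)
        ≤ (L + (ε : ℝ≥0∞) / 2) + (A⁻¹ + (ε : ℝ≥0∞) / 2) := by
          exact add_le_add (le_of_eq hofℓ) hainv
      _ = A⁻¹ + L + ((ε : ℝ≥0∞) / 2 + (ε : ℝ≥0∞) / 2) := by ring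
      _ = 1 / A + L + (ε : ℝ≥0∞) := by rw [ENNReal.add_halves, one_div]
  exact le_trans h1 (le_trans h2 h3)
end

section
/- (Lemma 6.4, combinatorial curvature bound) Assume ℓ*(G) < ∞ and suppose G carries an orientation such that K_comb(v) > 0 for every v ∈ V. Then α(G) ≥ (inf_{v ∈ V} K_comb(v))/ℓ*(G). -/
open scoped Classical ENNReal
open MeasureTheory

/-!
Count the edges of a finite subgraph `F` by their terminal vertex, and let `c = inf K_comb`.
At an interior vertex `v` every edge of `E_v` lies in `F`, so `K_comb(v) ≥ c` gives
`#E_v⁻ ≤ (1 - c) #E_v⁺`; at a boundary vertex the edges of `F` ending there number at most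
`deg_F(v)`. Summing over the vertices, `#F ≤ deg(∂F) + (1 - c) #F`, i.e. `c #F ≤ deg(∂F)`,
while `mes(F) ≤ ℓ* #F`.
-/

lemma Finset.card_filter_eq_ncard_of_subset {α : Type*} {p : α → Prop} [DecidablePred p]
    {s : Finset α} (h : {a | p a} ⊆ s) : (s.filter p).card = {a | p a}.ncard := by
  rw [← Set.ncard_coe_finset, Finset.coe_filter]
  congr 1
  ext a
  exact ⟨And.right, fun hp => ⟨h hp, hp⟩⟩

namespace MetricGraph

variable (Γ : MetricGraph)

lemma isFinSubgraph_singleton (e : Γ.E) : Γ.IsFinSubgraph {e} := by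
  refine ⟨Finset.singleton_nonempty e, ?_⟩
  have hverts : (↑(Γ.vertsOf {e}) : Set Γ.V) = {(Γ.ends e).1, (Γ.ends e).2} := by
    ext w
    simp [vertsOf]
  rw [SubConn, hverts]
  refine SimpleGraph.induce_pair_connected_of_adj ?_
  exact (SimpleGraph.fromRel_adj _ _ _).mpr
    ⟨Γ.no_loops e, .inl ⟨e, Finset.mem_singleton_self e, rfl⟩⟩

lemma Kcomb_le_one (v : Γ.V) : Γ.Kcomb v ≤ 1 := by
  unfold Kcomb
  have : 0 ≤ ((Γ.minusE v).ncard : ℝ) / (Γ.plusE v).ncard := by positivity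
  linarith

lemma ncard_minusE_le {c : ℝ} {v : Γ.V} (hv : (Γ.plusE v).Nonempty) (hc : c ≤ Γ.Kcomb v) :
    ((Γ.minusE v).ncard : ℝ) ≤ (1 - c) * (Γ.plusE v).ncard := by
  have hpos : (0 : ℝ) < (Γ.plusE v).ncard := by
    exact_mod_cast (Set.ncard_pos ((Γ.locfin v).subset fun _ => .inl)).mpr hv
  rw [← div_le_iff₀ hpos]
  unfold Kcomb at hc
  linarith

lemma star_subset_of_degree_le_degIn {F : Finset Γ.E} {v : Γ.V}
    (hv : Γ.degree v ≤ Γ.degIn F v) :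
    Γ.star v ⊆ F := by
  have hsub : F.filter (fun e => (Γ.ends e).1 = v ∨ (Γ.ends e).2 = v) ⊆ (Γ.locfin v).toFinset :=
    fun e he => by simpa using (Finset.mem_filter.mp he).2
  have heq := Finset.eq_of_subset_of_card_le hsub hv
  intro e he
  have : e ∈ (Γ.locfin v).toFinset := by simpa [star] using he
  exact (Finset.mem_filter.mp (heq ▸ this)).1

lemma card_eq_sum_card_filter_fst (F : Finset Γ.E) :
    F.card = ∑ v ∈ Γ.vertsOf F, (F.filter fun e => (Γ.ends e).1 = v).card :=
  Finset.card_eq_sum_card_fiberwise fun _ he =>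
    Finset.mem_union_left _ (Finset.mem_image_of_mem _ he)

lemma card_eq_sum_card_filter_snd (F : Finset Γ.E) :
    F.card = ∑ v ∈ Γ.vertsOf F, (F.filter fun e => (Γ.ends e).2 = v).card :=
  Finset.card_eq_sum_card_fiberwise fun _ he =>
    Finset.mem_union_right _ (Finset.mem_image_of_mem _ he)

lemma card_filter_snd_le {c : ℝ} (F : Finset Γ.E) {v : Γ.V} (hv : (Γ.plusE v).Nonempty)
    (hc : c ≤ Γ.Kcomb v) :
    ((F.filter fun e => (Γ.ends e).2 = v).card : ℝ) ≤
      (if Γ.degIn F v < Γ.degree v then (Γ.degIn F v : ℝ) else 0) +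
        (1 - c) * (F.filter fun e => (Γ.ends e).1 = v).card := by
  have hc1 : 0 ≤ 1 - c := by linarith [Γ.Kcomb_le_one v]
  split_ifs with hbdry
  · have : ((F.filter fun e => (Γ.ends e).2 = v).card : ℝ) ≤ Γ.degIn F v := by
      exact_mod_cast Finset.card_le_card (Finset.monotone_filter_right F fun _ _ => Or.inr)
    have : (0 : ℝ) ≤ (1 - c) * (F.filter fun e => (Γ.ends e).1 = v).card := by positivity
    linarith
  · have hstar := Γ.star_subset_of_degree_le_degIn (not_lt.mp hbdry)
    rw [zero_add, Finset.card_filter_eq_ncard_of_subset fun e he => hstar (.inr he),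
      Finset.card_filter_eq_ncard_of_subset fun e he => hstar (.inl he)]
    exact Γ.ncard_minusE_le hv hc

lemma mul_card_le_degBdry {c : ℝ} (hplus : ∀ v, (Γ.plusE v).Nonempty)
    (hc : ∀ v, c ≤ Γ.Kcomb v) (F : Finset Γ.E) : c * F.card ≤ Γ.degBdry F := by
  have hcount : (F.card : ℝ) ≤ Γ.degBdry F + (1 - c) * F.card :=
    calc (F.card : ℝ)
        = ∑ v ∈ Γ.vertsOf F, ((F.filter fun e => (Γ.ends e).2 = v).card : ℝ) := by
          exact_mod_cast Γ.card_eq_sum_card_filter_snd F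
      _ ≤ ∑ v ∈ Γ.vertsOf F, ((if Γ.degIn F v < Γ.degree v then (Γ.degIn F v : ℝ) else 0) +
            (1 - c) * (F.filter fun e => (Γ.ends e).1 = v).card) :=
          Finset.sum_le_sum fun v _ => Γ.card_filter_snd_le F (hplus v) (hc v)
      _ = Γ.degBdry F + (1 - c) * F.card := by
          rw [Finset.sum_add_distrib, ← Finset.mul_sum, ← Finset.sum_filter,
            Γ.card_eq_sum_card_filter_fst F]
          push_cast
          rfl
  linarith

lemma mes_le_ellSup_mul_card (hlen : BddAbove (Set.range Γ.len)) (F : Finset Γ.E) :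
    Γ.mes F ≤ Γ.ellSup * F.card := by
  rw [mes, mul_comm, ← nsmul_eq_mul]
  exact Finset.sum_le_card_nsmul F Γ.len _ fun e _ => le_csSup hlen ⟨e, rfl⟩

lemma div_ellSup_le_degBdry_div_mes (hlen : BddAbove (Set.range Γ.len)) {c : ℝ} (hc : 0 ≤ c)
    {F : Finset Γ.E} (hF : F.Nonempty) (hcount : c * F.card ≤ Γ.degBdry F) :
    c / Γ.ellSup ≤ Γ.degBdry F / Γ.mes F := by
  obtain ⟨e, he⟩ := hF
  have hL : 0 < Γ.ellSup := (Γ.len_pos e).trans_le (le_csSup hlen ⟨e, rfl⟩)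
  have hmes : 0 < Γ.mes F := Finset.sum_pos (fun e _ => Γ.len_pos e) ⟨e, he⟩
  rw [div_le_div_iff₀ hL hmes]
  calc c * Γ.mes F ≤ c * (Γ.ellSup * F.card) :=
        mul_le_mul_of_nonneg_left (Γ.mes_le_ellSup_mul_card hlen F) hc
    _ = c * F.card * Γ.ellSup := by ring
    _ ≤ Γ.degBdry F * Γ.ellSup := mul_le_mul_of_nonneg_right hcount hL.le

end MetricGraph

/-- **Lemma 6.4 (combinatorial curvature bound).** If `ℓ*(G) < ∞` and `K_comb(v) > 0`
for every vertex `v` (in particular `E_v⁺ ≠ ∅`), then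
`α(G) ≥ (inf_v K_comb(v)) / ℓ*(G)`. -/
theorem alpha_ge_inf_comb_curvature (Γ : MetricGraph)
    (hlen : BddAbove (Set.range Γ.len))
    (h : ∀ v : Γ.V, (Γ.plusE v).Nonempty ∧ 0 < Γ.Kcomb v) :
    sInf (Set.range Γ.Kcomb) / Γ.ellSup ≤ Γ.alpha := by
  have := Γ.infV
  obtain ⟨e₀⟩ := Γ.infE.nonempty
  have hKpos : ∀ K ∈ Set.range Γ.Kcomb, 0 ≤ K := by
    rintro _ ⟨v, rfl⟩
    exact (h v).2.le
  have hc : ∀ v, sInf (Set.range Γ.Kcomb) ≤ Γ.Kcomb v :=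
    fun v => csInf_le ⟨0, hKpos⟩ ⟨v, rfl⟩
  have hc0 : 0 ≤ sInf (Set.range Γ.Kcomb) := le_csInf (Set.range_nonempty _) hKpos
  refine le_csInf ⟨_, {e₀}, Γ.isFinSubgraph_singleton e₀, rfl⟩ ?_
  rintro _ ⟨F, ⟨hF, -⟩, rfl⟩
  exact Γ.div_ellSup_le_degBdry_div_mes hlen hc0 hF
    (Γ.mul_card_le_degBdry (fun v => (h v).1) hc F)
end
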